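/- arXiv:2604.05606 — 3 statements merged into one kernel-verified Lean document; each statement's English description precedes it below -/
import Mathlib

section
/- Let U be a finite set with |U| = n ≥ 2, and let U_1 ⊇ U_2 ⊇ ... ⊇ U_m be nested nonempty subsets of U. For each i ∈ [m], let S_i ⊆ U_i, and assume every element u ∈ U belongs to at most two of the sets S_i. Then the sum over i of |S_i|/|U_i| is at most 2·(harmonic number H_n) = O(log n). -/
/-!
Charge each element `u` to the sets `S_i` containing it: it contributes `1 / |U_i|` to the
sum for each of them, hence at most `2 / f u`, where `f u` is the size of the smallest `U_i`
containing `u`. Because the `U_i` form a chain, all `u` with `f u ≤ k` lie in a single `U_i`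
of size at most `k`, so at most `k` elements have `f u ≤ k`; and any such function satisfies
`∑ 1 / f u ≤ H_n` (peel off an element with the largest value of `f`).
-/

open Finset

theorem sum_one_div_le_sum_Icc_of_card_filter_le {α : Type*} [DecidableEq α] (f : α → ℕ)
    (s : Finset α) (hf : ∀ k, #(s.filter (f · ≤ k)) ≤ k) :
    ∑ u ∈ s, (1 : ℝ) / f u ≤ ∑ j ∈ Icc 1 #s, (1 : ℝ) / j := by
  induction s using Finset.induction_on_max_value f with
  | empty => simp
  | insert a s ha hmax ih =>
    have hcard : #s + 1 ≤ f a := by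
      have := hf (f a)
      rwa [filter_true_of_mem (by simpa using hmax), card_insert_of_notMem ha] at this
    have hs : ∀ k, #(s.filter (f · ≤ k)) ≤ k := fun k =>
      (card_le_card (filter_subset_filter _ (subset_insert a s))).trans (hf k)
    rw [sum_insert ha, card_insert_of_notMem ha, sum_Icc_succ_top (by omega), add_comm]
    gcongr
    exact ih hs

theorem sum_card_mul_eq_sum_sum_filter_mem {ι α R : Type*} [Fintype ι] [Fintype α]
    [DecidableEq α] [NonAssocSemiring R] (S : ι → Finset α) (w : ι → R) :
    ∑ i, (#(S i) : R) * w i = ∑ u, ∑ i ∈ univ.filter (u ∈ S ·), w i := by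
  simp_rw [← nsmul_eq_mul, ← sum_const]
  exact sum_comm' (by simp)

theorem Antitone.card_biUnion_filter_card_le {ι α : Type*} [LinearOrder ι] [Fintype ι]
    [DecidableEq α] {U : ι → Finset α} (hU : Antitone U) (k : ℕ) :
    #((univ.filter fun i => #(U i) ≤ k).biUnion U) ≤ k := by
  set J := univ.filter fun i => #(U i) ≤ k
  rcases J.eq_empty_or_nonempty with hJ | hJ
  · simp [hJ]
  have hmin : J.min' hJ ∈ J := J.min'_mem hJ
  calc #(J.biUnion U) ≤ #(U (J.min' hJ)) :=
        card_le_card (biUnion_subset.2 fun i hi => hU (J.min'_le i hi))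
    _ ≤ k := (mem_filter.1 hmin).2

section MinCard

variable {ι α : Type*} [Fintype ι] [Fintype α] [DecidableEq α] (U : ι → Finset α)

/-- The size of the smallest `U i` containing `u`, or the size of `α` if there is none. -/
def minCard (u : α) : ℕ :=
  (insert (Fintype.card α) ((univ.filter (u ∈ U ·)).image fun i => #(U i))).min'
    (insert_nonempty _ _)

variable {U}

theorem minCard_le_card {u : α} {i : ι} (hu : u ∈ U i) : minCard U u ≤ #(U i) :=
  min'_le _ _ (mem_insert_of_mem (mem_image_of_mem _ (mem_filter.2 ⟨mem_univ i, hu⟩)))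

theorem exists_mem_card_eq_minCard {u : α} (h : minCard U u < Fintype.card α) :
    ∃ i, u ∈ U i ∧ #(U i) = minCard U u := by
  have hmem : minCard U u ∈
      insert (Fintype.card α) ((univ.filter (u ∈ U ·)).image fun i => #(U i)) :=
    min'_mem _ _
  rcases mem_insert.1 hmem with heq | hmem
  · exact absurd heq h.ne
  · simpa using hmem

theorem minCard_pos (u : α) : 0 < minCard U u := by
  by_cases h : minCard U u < Fintype.card α
  · obtain ⟨i, hu, heq⟩ := exists_mem_card_eq_minCard h
    exact heq ▸ card_pos.2 ⟨u, hu⟩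
  · exact (Fintype.card_pos_iff.2 ⟨u⟩).trans_le (not_lt.1 h)

theorem card_filter_minCard_le [LinearOrder ι] (hU : Antitone U) (k : ℕ) :
    #(univ.filter (minCard U · ≤ k)) ≤ k := by
  rcases le_or_gt (Fintype.card α) k with hk | hk
  · exact (card_le_univ _).trans hk
  refine (card_le_card fun u hu => ?_).trans (hU.card_biUnion_filter_card_le k)
  obtain ⟨i, hui, heq⟩ := exists_mem_card_eq_minCard ((mem_filter.1 hu).2.trans_lt hk)
  exact mem_biUnion.2 ⟨i, mem_filter.2 ⟨mem_univ i, heq ▸ (mem_filter.1 hu).2⟩, hui⟩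

end MinCard

theorem stmt_1_general {α : Type*} [Fintype α] [DecidableEq α] (n m : ℕ)
    (hcard : Fintype.card α = n)
    (Us Ss : Fin m → Finset α)
    (hnested : ∀ i j : Fin m, i ≤ j → Us j ⊆ Us i)
    (hsub : ∀ i, Ss i ⊆ Us i)
    (htwo : ∀ u : α, (Finset.univ.filter (fun i => u ∈ Ss i)).card ≤ 2) :
    ∑ i, ((Ss i).card : ℝ) / ((Us i).card : ℝ)
      ≤ 2 * ∑ j ∈ Finset.Icc 1 n, (1 : ℝ) / (j : ℝ) := by
  have hcharge (u : α) :
      ∑ i ∈ univ.filter (u ∈ Ss ·), (1 : ℝ) / #(Us i) ≤ 2 * ((1 : ℝ) / minCard Us u) := by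
    calc ∑ i ∈ univ.filter (u ∈ Ss ·), (1 : ℝ) / #(Us i)
        ≤ #(univ.filter (u ∈ Ss ·)) • ((1 : ℝ) / minCard Us u) :=
          sum_le_card_nsmul _ _ _ fun i hi => one_div_le_one_div_of_le
            (by exact_mod_cast minCard_pos u)
            (by exact_mod_cast minCard_le_card (hsub i (mem_filter.1 hi).2))
      _ ≤ 2 * ((1 : ℝ) / minCard Us u) := by
          rw [nsmul_eq_mul]
          gcongr
          exact_mod_cast htwo u
  calc ∑ i, (#(Ss i) : ℝ) / #(Us i) = ∑ i, (#(Ss i) : ℝ) * (1 / #(Us i)) := by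
        simp only [mul_one_div]
    _ = ∑ u, ∑ i ∈ univ.filter (u ∈ Ss ·), (1 : ℝ) / #(Us i) :=
        sum_card_mul_eq_sum_sum_filter_mem Ss _
    _ ≤ ∑ u, 2 * ((1 : ℝ) / minCard Us u) := sum_le_sum fun u _ => hcharge u
    _ = 2 * ∑ u, (1 : ℝ) / minCard Us u := (mul_sum _ _ _).symm
    _ ≤ 2 * ∑ j ∈ Icc 1 n, (1 : ℝ) / j := by
        gcongr
        simpa [hcard] using sum_one_div_le_sum_Icc_of_card_filter_le (minCard Us) univ
          (card_filter_minCard_le hnested)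

/-- For a nested chain of nonempty subsets `Us 0 ⊇ Us 1 ⊇ …` of a finite
set of size `n ≥ 2`, with `Ss i ⊆ Us i` and every element appearing in at
most two of the `Ss i`, the sum of `|Ss i| / |Us i|` is at most twice the
`n`-th harmonic number. -/
theorem stmt_1 {α : Type*} [Fintype α] [DecidableEq α] (n m : ℕ)
    (hn : 2 ≤ n) (hcard : Fintype.card α = n)
    (Us Ss : Fin m → Finset α)
    (hnested : ∀ i j : Fin m, i ≤ j → Us j ⊆ Us i)
    (hne : ∀ i, (Us i).Nonempty)
    (hsub : ∀ i, Ss i ⊆ Us i)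
    (htwo : ∀ u : α, (Finset.univ.filter (fun i => u ∈ Ss i)).card ≤ 2) :
    ∑ i, ((Ss i).card : ℝ) / ((Us i).card : ℝ)
      ≤ 2 * ∑ j ∈ Finset.Icc 1 n, (1 : ℝ) / (j : ℝ) :=
  stmt_1_general n m hcard Us Ss hnested hsub htwo
end

section
/- Under landmark resampling, at any time T the individual realizations of all objects come from at most O(log T) distinct time steps, and this set of possible time steps depends only on T. Formally: any resample schedule t_0 < t_1 < ... with t_i = t_{i-1} + 2^i + x_i where x_i ∈ [0, 2^i] maximizes trailing binary zeros of t_i, has the property that for each i, t_i is divisible by 2^i and t_i ∈ [T - 2^{i+3}, T] whenever the object's current realization at time T came from its i-th resample; since each interval [T - 2^{i+3}, T] contains at most 8 multiples of 2^i and i ≤ log_2 T, the total number of possible origin times is at most 8·log_2 T + O(1). -/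
/-!
If the current realization comes from the `i`-th resample at time `T`, then `t i ≤ T < t (i+1)`,
and each gap `t (i+1) - t i` is at most `2^(i+2)`, so `t i` is a multiple of `2^i` in the window
`(T - 2^(i+3), T]`; moreover `2^i ≤ t i ≤ T` forces `i ≤ log₂ T` unless `t i = 0`. Such a window
contains at most `8` multiples of `2^i`, and there are `log₂ T + 1` admissible levels `i`.
-/

/-- The set of possible origin times at time `T` under landmark resampling:
times `s ≤ T` that are divisible by `2^i` for some `i ≤ log₂ T` with
`T < s + 2^(i+3)`.  It depends only on `T`. -/
def landmarkSet (T : ℕ) : Set ℕ :=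
  {s | s ≤ T ∧ ∃ i ≤ Nat.log 2 T, 2 ^ i ∣ s ∧ T < s + 2 ^ (i + 3)}

open Finset

lemma ncard_dvd_window_le {d : ℕ} (hd : 0 < d) (k T : ℕ) :
    {s | s ≤ T ∧ d ∣ s ∧ T < s + d * k}.ncard ≤ k := by
  have hsub : {s | s ≤ T ∧ d ∣ s ∧ T < s + d * k} ⊆
      (d * ·) '' ↑(Ico (T / d + 1 - k) (T / d + 1)) := by
    rintro _ ⟨hsT, ⟨m, rfl⟩, hlt⟩
    refine ⟨m, ?_, rfl⟩
    have hm_le : m ≤ T / d := (Nat.le_div_iff_mul_le hd).mpr (by rwa [mul_comm])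
    have hm_gt : T / d < m + k := (Nat.div_lt_iff_lt_mul hd).mpr (by linarith)
    simp only [coe_Ico, Set.mem_Ico]
    omega
  calc _ ≤ _ := Set.ncard_le_ncard hsub (Set.toFinite _)
    _ ≤ (↑(Ico (T / d + 1 - k) (T / d + 1)) : Set ℕ).ncard := Set.ncard_image_le
    _ ≤ k := by rw [Set.ncard_coe_finset, Nat.card_Ico]; omega

lemma landmarkSet_eq_biUnion (T : ℕ) :
    landmarkSet T =
      ⋃ i ∈ range (Nat.log 2 T + 1), {s | s ≤ T ∧ 2 ^ i ∣ s ∧ T < s + 2 ^ i * 2 ^ 3} := by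
  ext s
  simp only [landmarkSet, ← pow_add, Set.mem_ofPred_eq, Set.mem_iUnion, mem_range,
    Nat.lt_succ_iff, exists_prop]
  constructor
  · rintro ⟨hsT, i, hi, hrest⟩
    exact ⟨i, hi, hsT, hrest⟩
  · rintro ⟨i, hi, hsT, hrest⟩
    exact ⟨hsT, i, hi, hrest⟩

lemma ncard_landmarkSet_le (T : ℕ) : (landmarkSet T).ncard ≤ 8 * (Nat.log 2 T + 1) := by
  rw [landmarkSet_eq_biUnion]
  calc _ ≤ ∑ i ∈ range (Nat.log 2 T + 1), {s | s ≤ T ∧ 2 ^ i ∣ s ∧ T < s + 2 ^ i * 2 ^ 3}.ncard :=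
        Finset.set_ncard_biUnion_le _ _
    _ ≤ ∑ _i ∈ range (Nat.log 2 T + 1), 2 ^ 3 :=
        sum_le_sum fun i _ => ncard_dvd_window_le (Nat.two_pow_pos i) _ T
    _ = 8 * (Nat.log 2 T + 1) := by simp [mul_comm]

lemma mem_landmarkSet_of_dvd {T s i : ℕ} (hsT : s ≤ T) (hdvd : 2 ^ i ∣ s)
    (hlt : T < s + 2 ^ (i + 3)) : s ∈ landmarkSet T := by
  rcases Nat.eq_zero_or_pos s with rfl | hs
  · -- `0` is divisible by every power of two, so take the top level `i = log₂ T`.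
    have hT : T < 2 ^ (Nat.log 2 T + 1) := Nat.lt_pow_succ_log_self one_lt_two T
    have hmono : 2 ^ (Nat.log 2 T + 1) ≤ 2 ^ (Nat.log 2 T + 3) :=
      Nat.pow_le_pow_right two_pos (by omega)
    exact ⟨hsT, Nat.log 2 T, le_rfl, dvd_zero _, by omega⟩
  · have hi : i ≤ Nat.log 2 T :=
      Nat.le_log_of_pow_le one_lt_two ((Nat.le_of_dvd hs hdvd).trans hsT)
    exact ⟨hsT, i, hi, hdvd, hlt⟩

lemma schedule_succ_le {t x : ℕ → ℕ} (hx : ∀ i, x (i + 1) ≤ 2 ^ (i + 1))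
    (ht : ∀ i, t (i + 1) = t i + 2 ^ (i + 1) + x (i + 1)) (i : ℕ) :
    t (i + 1) ≤ t i + 2 ^ (i + 2) := by
  rw [ht i, pow_succ 2 (i + 1)]
  linarith [hx i]

theorem stmt_9_general (T : ℕ) :
    (∀ t x : ℕ → ℕ,
        (∀ i, x (i + 1) ≤ 2 ^ (i + 1)) →
        (∀ i, t (i + 1) = t i + 2 ^ (i + 1) + x (i + 1)) →
        (∀ i, 2 ^ i ∣ t i) →
        ∀ i, t i ≤ T → T < t (i + 1) → t i ∈ landmarkSet T) ∧
    (landmarkSet T).ncard ≤ 8 * (Nat.log 2 T + 1) := by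
  refine ⟨fun t x hx ht hdvd i hle hlt => mem_landmarkSet_of_dvd hle (hdvd i) ?_,
    ncard_landmarkSet_le T⟩
  have hgap := schedule_succ_le hx ht i
  have hpow : 2 ^ (i + 2) < 2 ^ (i + 3) := Nat.pow_lt_pow_right one_lt_two (by omega)
  omega

/-- Under landmark resampling (schedule `t (i+1) = t i + 2^(i+1) + x (i+1)`
with `x (i+1) ∈ [0, 2^(i+1)]` chosen so that `2^i ∣ t i`), the current origin
time of every object at time `T` lies in `landmarkSet T`, a set depending
only on `T` of size at most `8 * (log₂ T + 1)`. -/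
theorem stmt_9 (T : ℕ) (hT : 1 ≤ T) :
    (∀ t x : ℕ → ℕ,
        (∀ i, x (i + 1) ≤ 2 ^ (i + 1)) →
        (∀ i, t (i + 1) = t i + 2 ^ (i + 1) + x (i + 1)) →
        (∀ i, 2 ^ i ∣ t i) →
        ∀ i, t i ≤ T → T < t (i + 1) → t i ∈ landmarkSet T) ∧
    (landmarkSet T).ncard ≤ 8 * (Nat.log 2 T + 1) :=
  stmt_9_general T
end

section
/- Let events X_{v_1}, ..., X_{v_k} be defined in a probability space and let Y = X_{v_1} ∨ ... ∨ X_{v_k}. Suppose for each i, P(X_{v_i} | ⋀_{j>i} ¬X_{v_j}) = p_i (conditional probabilities well-defined). Then P(Y) ≥ (∑_i p_i)·(1 - P(Y)); consequently, if ∑_i p_i ≥ 2 then P(Y) ≥ 1/2 — indeed if P(Y) < 1/2 then P(Y) ≥ (1/2)∑_i p_i ≥ 1, a contradiction, so P(Y) ≥ 1/2. -/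
open MeasureTheory

/-!
Let `Aᵢ = Xᵢ ∩ ⋂_{j>i} Xⱼᶜ` be the event that `i` is the last index whose event occurs. The `Aᵢ`
are disjoint with union `Y`, so `P(Y) = ∑ P(Aᵢ) = ∑ pᵢ P(⋂_{j>i} Xⱼᶜ)`, and every
`⋂_{j>i} Xⱼᶜ` contains `Yᶜ`, whence `P(Y) ≥ (∑ pᵢ)(1 - P(Y))`.
-/

namespace Set

open Function

variable {Ω ι : Type*} [LinearOrder ι] (X : ι → Set Ω)

theorem pairwise_disjoint_inter_iInter_compl_of_lt :
    Pairwise (Disjoint on fun i => X i ∩ ⋂ j, ⋂ (_ : i < j), (X j)ᶜ) := by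
  have of_lt {i j : ι} (hij : i < j) :
      Disjoint (X i ∩ ⋂ j, ⋂ (_ : i < j), (X j)ᶜ) (X j ∩ ⋂ l, ⋂ (_ : j < l), (X l)ᶜ) := by
    refine disjoint_left.mpr fun x ⟨_, hx_later⟩ ⟨hxj, _⟩ => ?_
    exact mem_iInter₂.mp hx_later j hij hxj
  intro i j hne
  rcases hne.lt_or_gt with hij | hji
  · exact of_lt hij
  · exact (of_lt hji).symm

theorem iUnion_inter_iInter_compl_of_lt [Finite ι] :
    ⋃ i, (X i ∩ ⋂ j, ⋂ (_ : i < j), (X j)ᶜ) = ⋃ i, X i := by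
  refine subset_antisymm (iUnion_mono fun i => inter_subset_left) fun x hx => ?_
  obtain ⟨i, hi⟩ := mem_iUnion.mp hx
  obtain ⟨m, hm, hm_max⟩ := exists_max_image {j | x ∈ X j} id (toFinite _) ⟨i, hi⟩
  exact mem_iUnion.mpr ⟨m, hm, mem_iInter₂.mpr fun j hmj hxj => (hm_max j hxj).not_gt hmj⟩

theorem compl_iUnion_subset_iInter_compl_of_lt (i : ι) :
    (⋃ i, X i)ᶜ ⊆ ⋂ j, ⋂ (_ : i < j), (X j)ᶜ := by
  rw [compl_iUnion]
  exact iInter_mono fun j => subset_iInter fun _ => subset_rfl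

end Set

theorem mul_le_of_eq_mul_of_le {a b c p : ℝ} (ha : 0 ≤ a) (hc : 0 ≤ c) (hcb : c ≤ b)
    (hab : a = p * b) : p * c ≤ a := by
  rcases le_or_gt 0 p with hp | hp
  · exact hab ▸ mul_le_mul_of_nonneg_left hcb hp
  · nlinarith

theorem half_le_of_mul_one_sub_le {S y : ℝ} (hS : 2 ≤ S) (h : S * (1 - y) ≤ y) : 1 / 2 ≤ y := by
  nlinarith

theorem sum_mul_one_sub_probReal_iUnion_le {Ω ι : Type*} [MeasurableSpace Ω] {μ : Measure Ω}
    [IsProbabilityMeasure μ] [Fintype ι] [LinearOrder ι] {X : ι → Set Ω} {p : ι → ℝ}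
    (hX : ∀ i, MeasurableSet (X i))
    (hcond : ∀ i, μ.real (X i ∩ ⋂ j, ⋂ (_ : i < j), (X j)ᶜ)
        = p i * μ.real (⋂ j, ⋂ (_ : i < j), (X j)ᶜ)) :
    (∑ i, p i) * (1 - μ.real (⋃ i, X i)) ≤ μ.real (⋃ i, X i) := by
  have hA : ∀ i, MeasurableSet (X i ∩ ⋂ j, ⋂ (_ : i < j), (X j)ᶜ) := fun i =>
    (hX i).inter (.iInter fun j => .iInter fun _ => (hX j).compl)
  have hY : μ.real (⋃ i, X i) = ∑ i, μ.real (X i ∩ ⋂ j, ⋂ (_ : i < j), (X j)ᶜ) := by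
    rw [← measureReal_iUnion_fintype (Set.pairwise_disjoint_inter_iInter_compl_of_lt X) hA,
      Set.iUnion_inter_iInter_compl_of_lt]
  have hcompl (i : ι) : 1 - μ.real (⋃ i, X i) ≤ μ.real (⋂ j, ⋂ (_ : i < j), (X j)ᶜ) := by
    rw [← probReal_compl_eq_one_sub (.iUnion hX)]
    exact measureReal_mono (Set.compl_iUnion_subset_iInter_compl_of_lt X i)
  have hY_compl_nonneg : 0 ≤ 1 - μ.real (⋃ i, X i) := sub_nonneg.mpr measureReal_le_one
  calc (∑ i, p i) * (1 - μ.real (⋃ i, X i))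
      = ∑ i, p i * (1 - μ.real (⋃ i, X i)) := Finset.sum_mul ..
    _ ≤ ∑ i, μ.real (X i ∩ ⋂ j, ⋂ (_ : i < j), (X j)ᶜ) := Finset.sum_le_sum fun i _ =>
        mul_le_of_eq_mul_of_le measureReal_nonneg hY_compl_nonneg (hcompl i) (hcond i)
    _ = μ.real (⋃ i, X i) := hY.symm

theorem stmt_13_general {Ω : Type*} [MeasurableSpace Ω] (μ : Measure Ω)
    [IsProbabilityMeasure μ]
    (k : ℕ) (X : Fin k → Set Ω) (p : Fin k → ℝ)
    (hmeas : ∀ i, MeasurableSet (X i))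
    (hcond : ∀ i, (μ (X i ∩ ⋂ j, ⋂ (_ : i < j), (X j)ᶜ)).toReal
        = p i * (μ (⋂ j, ⋂ (_ : i < j), (X j)ᶜ)).toReal) :
    ((∑ i, p i) * (1 - (μ (⋃ i, X i)).toReal) ≤ (μ (⋃ i, X i)).toReal) ∧
    (2 ≤ ∑ i, p i → (1 / 2 : ℝ) ≤ (μ (⋃ i, X i)).toReal) := by
  have h := sum_mul_one_sub_probReal_iUnion_le hmeas hcond
  exact ⟨h, fun hS => half_le_of_mul_one_sub_le hS h⟩

/-- If `P(Xᵢ ∩ ⋂_{j>i} Xⱼᶜ) = pᵢ · P(⋂_{j>i} Xⱼᶜ)` for every `i`, then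
`P(Y) ≥ (∑ pᵢ)(1 - P(Y))` where `Y = ⋃ Xᵢ`; in particular if `∑ pᵢ ≥ 2`
then `P(Y) ≥ 1/2`. -/
theorem stmt_13 {Ω : Type*} [MeasurableSpace Ω] (μ : Measure Ω)
    [IsProbabilityMeasure μ]
    (k : ℕ) (X : Fin k → Set Ω) (p : Fin k → ℝ)
    (hmeas : ∀ i, MeasurableSet (X i))
    (hp0 : ∀ i, 0 ≤ p i)
    (hcond : ∀ i, (μ (X i ∩ ⋂ j, ⋂ (_ : i < j), (X j)ᶜ)).toReal
        = p i * (μ (⋂ j, ⋂ (_ : i < j), (X j)ᶜ)).toReal) :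
    ((∑ i, p i) * (1 - (μ (⋃ i, X i)).toReal) ≤ (μ (⋃ i, X i)).toReal) ∧
    (2 ≤ ∑ i, p i → (1 / 2 : ℝ) ≤ (μ (⋃ i, X i)).toReal) :=
  stmt_13_general μ k X p hmeas hcond
end
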